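/- arXiv:2006.05317 — 5 statements merged into one kernel-verified Lean document; each statement's English description precedes it below -/
import Mathlib

section
/- The vector fields on ℝ^5, X = ∂ₓ − (y/2)∂_z − (z/2 + xy/12)∂_v − (y²/12)∂_w and Y = ∂_y + (x/2)∂_z + (x²/12)∂_v + (xy/12 − z/2)∂_w, satisfy: the Lie bracket [X,Y] equals Z = ∂_z + (x/2)∂_v + (y/2)∂_w, [X,Z] = ∂_v, [Y,Z] = ∂_w, and [X,∂_v] = [X,∂_w] = [Y,∂_v] = [Y,∂_w] = [∂_v,∂_w] = 0. -/
/-- Lie bracket of vector fields on ℝ⁵ ≅ ℝ×ℝ×ℝ×ℝ×ℝ :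
`[A,B](p) = DB(p)·A(p) − DA(p)·B(p)`. -/
noncomputable def vfBracket (A B : ℝ × ℝ × ℝ × ℝ × ℝ → ℝ × ℝ × ℝ × ℝ × ℝ) :
    ℝ × ℝ × ℝ × ℝ × ℝ → ℝ × ℝ × ℝ × ℝ × ℝ :=
  fun p => fderiv ℝ B p (A p) - fderiv ℝ A p (B p)

/-- The left-invariant vector field X on the Cartan group in coordinates of the
first kind. -/
noncomputable def cartanX : ℝ × ℝ × ℝ × ℝ × ℝ → ℝ × ℝ × ℝ × ℝ × ℝ :=
  fun p =>
    match p with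
    | (x, y, z, _, _) => (1, 0, -(y / 2), -(z / 2 + x * y / 12), -(y ^ 2 / 12))

/-- The left-invariant vector field Y. -/
noncomputable def cartanY : ℝ × ℝ × ℝ × ℝ × ℝ → ℝ × ℝ × ℝ × ℝ × ℝ :=
  fun p =>
    match p with
    | (x, y, z, _, _) => (0, 1, x / 2, x ^ 2 / 12, x * y / 12 - z / 2)

/-- The left-invariant vector field Z. -/
noncomputable def cartanZ : ℝ × ℝ × ℝ × ℝ × ℝ → ℝ × ℝ × ℝ × ℝ × ℝ :=
  fun p =>
    match p with
    | (x, y, _, _, _) => (0, 0, 1, x / 2, y / 2)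

/-- The coordinate vector field ∂ᵥ. -/
noncomputable def cartanV : ℝ × ℝ × ℝ × ℝ × ℝ → ℝ × ℝ × ℝ × ℝ × ℝ := fun _ => (0, 0, 0, 1, 0)

/-- The coordinate vector field ∂_w. -/
noncomputable def cartanW : ℝ × ℝ × ℝ × ℝ × ℝ → ℝ × ℝ × ℝ × ℝ × ℝ := fun _ => (0, 0, 0, 0, 1)


theorem fderiv_fun_div_const {𝕜 E : Type*} [NontriviallyNormedField 𝕜] [NormedAddCommGroup E]
    [NormedSpace 𝕜 E] {f : E → 𝕜} {x : E} (hf : DifferentiableAt 𝕜 f x) (c : 𝕜) :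
    fderiv 𝕜 (fun y => f y / c) x = c⁻¹ • fderiv 𝕜 f x := by
  simpa only [div_eq_mul_inv] using (hf.hasFDerivAt.mul_const c⁻¹).fderiv

theorem fderiv_cartanX (x y z v w a b c d e : ℝ) :
    fderiv ℝ cartanX (x, y, z, v, w) (a, b, c, d, e) =
      (0, 0, -(b / 2), -(c / 2 + (a * y + x * b) / 12), -(y * b / 6)) := by
  -- the `match` in the definition blocks the differentiation rules; restate it with projections
  change fderiv ℝ (fun q : ℝ × ℝ × ℝ × ℝ × ℝ =>
    ((1 : ℝ), (0 : ℝ), -(q.2.1 / 2), -(q.2.2.1 / 2 + q.1 * q.2.1 / 12), -(q.2.1 ^ 2 / 12))) _ _ = _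
  simp (disch := fun_prop) only [DifferentiableAt.fderiv_prodMk, fderiv_fun_const, fderiv_fun_neg,
    fderiv_fun_add, fderiv_fun_mul, fderiv_fun_pow, fderiv_fun_div_const, fderiv.fst, fderiv.snd,
    fderiv_fun_id]
  ext <;> simp <;> ring

theorem fderiv_cartanY (x y z v w a b c d e : ℝ) :
    fderiv ℝ cartanY (x, y, z, v, w) (a, b, c, d, e) =
      (0, 0, a / 2, x * a / 6, (a * y + x * b) / 12 - c / 2) := by
  change fderiv ℝ (fun q : ℝ × ℝ × ℝ × ℝ × ℝ =>
    ((0 : ℝ), (1 : ℝ), q.1 / 2, q.1 ^ 2 / 12, q.1 * q.2.1 / 12 - q.2.2.1 / 2)) _ _ = _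
  simp (disch := fun_prop) only [DifferentiableAt.fderiv_prodMk, fderiv_fun_const, fderiv_fun_sub,
    fderiv_fun_mul, fderiv_fun_pow, fderiv_fun_div_const, fderiv.fst, fderiv.snd, fderiv_fun_id]
  ext <;> simp <;> ring

theorem fderiv_cartanZ (x y z v w a b c d e : ℝ) :
    fderiv ℝ cartanZ (x, y, z, v, w) (a, b, c, d, e) = (0, 0, 0, a / 2, b / 2) := by
  change fderiv ℝ (fun q : ℝ × ℝ × ℝ × ℝ × ℝ =>
    ((0 : ℝ), (0 : ℝ), (1 : ℝ), q.1 / 2, q.2.1 / 2)) _ _ = _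
  simp (disch := fun_prop) only [DifferentiableAt.fderiv_prodMk, fderiv_fun_const,
    fderiv_fun_div_const, fderiv.fst, fderiv.snd, fderiv_fun_id]
  ext <;> simp <;> ring

theorem fderiv_cartanV (p : ℝ × ℝ × ℝ × ℝ × ℝ) : fderiv ℝ cartanV p = 0 :=
  fderiv_const_apply _

theorem fderiv_cartanW (p : ℝ × ℝ × ℝ × ℝ × ℝ) : fderiv ℝ cartanW p = 0 :=
  fderiv_const_apply _

theorem cartan_vector_fields_brackets :
    vfBracket cartanX cartanY = cartanZ ∧
    vfBracket cartanX cartanZ = cartanV ∧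
    vfBracket cartanY cartanZ = cartanW ∧
    vfBracket cartanX cartanV = 0 ∧
    vfBracket cartanX cartanW = 0 ∧
    vfBracket cartanY cartanV = 0 ∧
    vfBracket cartanY cartanW = 0 ∧
    vfBracket cartanV cartanW = 0 := by
  refine ⟨?_, ?_, ?_, ?_, ?_, ?_, ?_, ?_⟩ <;> funext ⟨x, y, z, v, w⟩ <;>
    simp only [vfBracket, cartanX, cartanY, cartanZ, cartanV, cartanW, fderiv_cartanX,
      fderiv_cartanY, fderiv_cartanZ, fderiv_cartanV, fderiv_cartanW, zero_apply] <;>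
    ext <;> dsimp <;> ring
end

section
/- Let u₁,u₂ be bounded measurable, x,y,z Lipschitz with x(0)=y(0)=z(0)=v(0)=0, x'=u₁, y'=u₂, z'=½(xu₂−yu₁) a.e., and v Lipschitz with v(0)=0 and v' = −½(z + xy/6)u₁ + (x²/12)u₂ a.e. Then v(t) = (1/12)x(t)²y(t) − ½ x(t)∫₀ᵗ x u₂ dτ + ½∫₀ᵗ x² u₂ dτ for all t. -/
/-!
Both integrals on the right-hand side are boundary terms. Along the system,
`z + x y / 2` has derivative `x u₂` and `2 v + x² y / 3 + x z` has derivative `x² u₂`.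
These functions are absolutely continuous on `[0, t]`, so by the fundamental theorem of calculus
for absolutely continuous functions the two integrals equal `z t + x t y t / 2` and
`2 v t + x t² y t / 3 + x t z t`. Eliminating `z t` between these identities gives the formula.
-/

open MeasureTheory intervalIntegral

theorem AbsolutelyContinuousOnInterval.integral_eq_sub_of_hasDerivAt_ae {f g : ℝ → ℝ} {a b : ℝ}
    (hf : AbsolutelyContinuousOnInterval f a b)
    (hg : ∀ᵐ t, t ∈ Set.uIoc a b → HasDerivAt f (g t) t) :
    ∫ t in a..b, g t = f b - f a := by
  rw [← hf.integral_deriv_eq_sub]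
  refine integral_congr_ae ?_
  filter_upwards [hg] with t ht hmem
  exact (ht hmem).deriv.symm

theorem LipschitzWith.absolutelyContinuousOnInterval {X : Type*} [PseudoMetricSpace X]
    {f : ℝ → X} {K : NNReal} (hf : LipschitzWith K f) (a b : ℝ) :
    AbsolutelyContinuousOnInterval f a b :=
  (hf.lipschitzOnWith (s := Set.uIcc a b)).absolutelyContinuousOnInterval

section CartanCoordinates

variable {u₁ u₂ x y z v : ℝ → ℝ} {t : ℝ}

theorem integral_x_mul_u₂_eq (hx : AbsolutelyContinuousOnInterval x 0 t)
    (hy : AbsolutelyContinuousOnInterval y 0 t) (hz : AbsolutelyContinuousOnInterval z 0 t)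
    (hx0 : x 0 = 0) (hz0 : z 0 = 0)
    (hx' : ∀ᵐ t, HasDerivAt x (u₁ t) t) (hy' : ∀ᵐ t, HasDerivAt y (u₂ t) t)
    (hz' : ∀ᵐ t, HasDerivAt z ((x t * u₂ t - y t * u₁ t) / 2) t) :
    ∫ τ in (0:ℝ)..t, x τ * u₂ τ = z t + x t * y t / 2 := by
  have hF : AbsolutelyContinuousOnInterval (fun s => z s + 2⁻¹ * (x s * y s)) 0 t :=
    hz.fun_add ((hx.fun_mul hy).const_mul _)
  rw [hF.integral_eq_sub_of_hasDerivAt_ae, hx0, hz0]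
  · ring
  filter_upwards [hx', hy', hz'] with s hxs hys hzs _
  exact (hzs.add ((hxs.mul hys).const_mul _)).congr_deriv (by ring)

theorem integral_x_sq_mul_u₂_eq (hx : AbsolutelyContinuousOnInterval x 0 t)
    (hy : AbsolutelyContinuousOnInterval y 0 t) (hz : AbsolutelyContinuousOnInterval z 0 t)
    (hv : AbsolutelyContinuousOnInterval v 0 t) (hx0 : x 0 = 0) (hv0 : v 0 = 0)
    (hx' : ∀ᵐ t, HasDerivAt x (u₁ t) t) (hy' : ∀ᵐ t, HasDerivAt y (u₂ t) t)
    (hz' : ∀ᵐ t, HasDerivAt z ((x t * u₂ t - y t * u₁ t) / 2) t)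
    (hv' : ∀ᵐ t, HasDerivAt v (-(z t + x t * y t / 6) * u₁ t / 2 + x t ^ 2 / 12 * u₂ t) t) :
    ∫ τ in (0:ℝ)..t, x τ ^ 2 * u₂ τ = 2 * v t + x t ^ 2 * y t / 3 + x t * z t := by
  have hF : AbsolutelyContinuousOnInterval
      (fun s => 2 * v s + 3⁻¹ * (x s * x s * y s) + x s * z s) 0 t :=
    ((hv.const_mul _).fun_add (((hx.fun_mul hx).fun_mul hy).const_mul _)).fun_add
      (hx.fun_mul hz)
  rw [hF.integral_eq_sub_of_hasDerivAt_ae, hx0, hv0]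
  · ring
  filter_upwards [hx', hy', hz', hv'] with s hxs hys hzs hvs _
  exact (((hvs.const_mul 2).add (((hxs.fun_mul hxs).fun_mul hys).const_mul _)).add
    (hxs.mul hzs)).congr_deriv (by ring)

end CartanCoordinates

theorem cartan_v_formula_general
    (u₁ u₂ x y z v : ℝ → ℝ)
    (hx : ∃ K, LipschitzWith K x) (hy : ∃ K, LipschitzWith K y)
    (hz : ∃ K, LipschitzWith K z) (hv : ∃ K, LipschitzWith K v)
    (hx0 : x 0 = 0) (hz0 : z 0 = 0) (hv0 : v 0 = 0)
    (hx' : ∀ᵐ t ∂(volume : Measure ℝ), HasDerivAt x (u₁ t) t)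
    (hy' : ∀ᵐ t ∂(volume : Measure ℝ), HasDerivAt y (u₂ t) t)
    (hz' : ∀ᵐ t ∂(volume : Measure ℝ),
      HasDerivAt z ((x t * u₂ t - y t * u₁ t) / 2) t)
    (hv' : ∀ᵐ t ∂(volume : Measure ℝ),
      HasDerivAt v (-(z t + x t * y t / 6) * u₁ t / 2 + x t ^ 2 / 12 * u₂ t) t) :
    ∀ t : ℝ, v t = x t ^ 2 * y t / 12 - x t * (∫ τ in (0:ℝ)..t, x τ * u₂ τ) / 2
      + (∫ τ in (0:ℝ)..t, x τ ^ 2 * u₂ τ) / 2 := by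
  obtain ⟨_, hx⟩ := hx
  obtain ⟨_, hy⟩ := hy
  obtain ⟨_, hz⟩ := hz
  obtain ⟨_, hv⟩ := hv
  intro t
  have hx := hx.absolutelyContinuousOnInterval 0 t
  have hy := hy.absolutelyContinuousOnInterval 0 t
  have hz := hz.absolutelyContinuousOnInterval 0 t
  rw [integral_x_mul_u₂_eq hx hy hz hx0 hz0 hx' hy' hz',
    integral_x_sq_mul_u₂_eq hx hy hz (hv.absolutelyContinuousOnInterval 0 t) hx0 hv0
      hx' hy' hz' hv']
  ring

theorem cartan_v_formula
    (u₁ u₂ x y z v : ℝ → ℝ)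
    (hu₁m : Measurable u₁) (hu₂m : Measurable u₂)
    (hu₁b : ∃ C, ∀ t, |u₁ t| ≤ C) (hu₂b : ∃ C, ∀ t, |u₂ t| ≤ C)
    (hx : ∃ K, LipschitzWith K x) (hy : ∃ K, LipschitzWith K y)
    (hz : ∃ K, LipschitzWith K z) (hv : ∃ K, LipschitzWith K v)
    (hx0 : x 0 = 0) (hy0 : y 0 = 0) (hz0 : z 0 = 0) (hv0 : v 0 = 0)
    (hx' : ∀ᵐ t ∂(volume : Measure ℝ), HasDerivAt x (u₁ t) t)
    (hy' : ∀ᵐ t ∂(volume : Measure ℝ), HasDerivAt y (u₂ t) t)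
    (hz' : ∀ᵐ t ∂(volume : Measure ℝ),
      HasDerivAt z ((x t * u₂ t - y t * u₁ t) / 2) t)
    (hv' : ∀ᵐ t ∂(volume : Measure ℝ),
      HasDerivAt v (-(z t + x t * y t / 6) * u₁ t / 2 + x t ^ 2 / 12 * u₂ t) t) :
    ∀ t : ℝ, v t = x t ^ 2 * y t / 12 - x t * (∫ τ in (0:ℝ)..t, x τ * u₂ τ) / 2
      + (∫ τ in (0:ℝ)..t, x τ ^ 2 * u₂ τ) / 2 :=
  cartan_v_formula_general u₁ u₂ x y z v hx hy hz hv hx0 hz0 hv0 hx' hy' hz' hv'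
end

section
/- Let u₁,u₂ be bounded measurable, x,y,z,w Lipschitz with x(0)=y(0)=z(0)=w(0)=0, x'=u₁, y'=u₂, z'=½(xu₂−yu₁) a.e., and w' = −(y²/12)u₁ − ½(z − xy/6)u₂ a.e. Then w(t) = −(1/12)x(t)y(t)² − ½ y(t)∫₀ᵗ x u₂ dτ + ∫₀ᵗ x y u₂ dτ for all t. -/
/-!
Along a horizontal curve `x' = u₁`, `y' = u₂`, the derivatives of `x y / 2 + z` and of
`w + x y² / 3 + y z / 2` are `x u₂` and `x y u₂`. Since all these coordinates are Lipschitz, hence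
absolutely continuous, the fundamental theorem of calculus turns the two identities into
`∫₀ᵗ x u₂ = x y / 2 + z` and `∫₀ᵗ x y u₂ = w + x y² / 3 + y z / 2`; eliminating `z` between them
gives the formula for `w`.
-/

open MeasureTheory intervalIntegral

theorem AbsolutelyContinuousOnInterval.integral_eq_sub_of_ae_hasDerivAt {f f' : ℝ → ℝ} {a b : ℝ}
    (hf : AbsolutelyContinuousOnInterval f a b) (hd : ∀ᵐ t, HasDerivAt f (f' t) t) :
    ∫ t in a..b, f' t = f b - f a := by
  rw [← hf.integral_deriv_eq_sub]
  refine integral_congr_ae ?_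
  filter_upwards [hd] with t ht _
  exact ht.deriv.symm

theorem AbsolutelyContinuousOnInterval.div_const {f : ℝ → ℝ} {a b : ℝ}
    (hf : AbsolutelyContinuousOnInterval f a b) (c : ℝ) :
    AbsolutelyContinuousOnInterval (fun x ↦ f x / c) a b := by
  simpa only [div_eq_mul_inv, mul_comm _ c⁻¹] using hf.const_mul c⁻¹

section HorizontalCurve

variable {u₁ u₂ x y z w : ℝ → ℝ} {t : ℝ}

theorem integral_mul_u₂_eq_of_horizontal
    (hx : AbsolutelyContinuousOnInterval x 0 t) (hy : AbsolutelyContinuousOnInterval y 0 t)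
    (hz : AbsolutelyContinuousOnInterval z 0 t) (hx0 : x 0 = 0) (hz0 : z 0 = 0)
    (hx' : ∀ᵐ τ, HasDerivAt x (u₁ τ) τ) (hy' : ∀ᵐ τ, HasDerivAt y (u₂ τ) τ)
    (hz' : ∀ᵐ τ, HasDerivAt z ((x τ * u₂ τ - y τ * u₁ τ) / 2) τ) :
    ∫ τ in (0:ℝ)..t, x τ * u₂ τ = x t * y t / 2 + z t := by
  have hac : AbsolutelyContinuousOnInterval (fun τ ↦ x τ * y τ / 2 + z τ) 0 t := by
    exact ((hx.fun_mul hy).div_const 2).fun_add hz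
  have hd : ∀ᵐ τ, HasDerivAt (fun τ ↦ x τ * y τ / 2 + z τ) (x τ * u₂ τ) τ := by
    filter_upwards [hx', hy', hz'] with τ hxτ hyτ hzτ
    exact (((hxτ.mul hyτ).div_const 2).add hzτ).congr_deriv (by ring)
  rw [hac.integral_eq_sub_of_ae_hasDerivAt hd, hx0, hz0]
  ring

theorem integral_mul_mul_u₂_eq_of_horizontal
    (hx : AbsolutelyContinuousOnInterval x 0 t) (hy : AbsolutelyContinuousOnInterval y 0 t)
    (hz : AbsolutelyContinuousOnInterval z 0 t) (hw : AbsolutelyContinuousOnInterval w 0 t)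
    (hx0 : x 0 = 0) (hz0 : z 0 = 0) (hw0 : w 0 = 0)
    (hx' : ∀ᵐ τ, HasDerivAt x (u₁ τ) τ) (hy' : ∀ᵐ τ, HasDerivAt y (u₂ τ) τ)
    (hz' : ∀ᵐ τ, HasDerivAt z ((x τ * u₂ τ - y τ * u₁ τ) / 2) τ)
    (hw' : ∀ᵐ τ, HasDerivAt w (-(y τ ^ 2 / 12) * u₁ τ - (z τ - x τ * y τ / 6) * u₂ τ / 2) τ) :
    ∫ τ in (0:ℝ)..t, x τ * y τ * u₂ τ = w t + x t * y t ^ 2 / 3 + y t * z t / 2 := by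
  have hac : AbsolutelyContinuousOnInterval
      (fun τ ↦ w τ + x τ * y τ ^ 2 / 3 + y τ * z τ / 2) 0 t := by
    simpa only [sq] using
      (hw.fun_add ((hx.fun_mul (hy.fun_mul hy)).div_const 3)).fun_add ((hy.fun_mul hz).div_const 2)
  have hd : ∀ᵐ τ, HasDerivAt (fun τ ↦ w τ + x τ * y τ ^ 2 / 3 + y τ * z τ / 2)
      (x τ * y τ * u₂ τ) τ := by
    filter_upwards [hx', hy', hz', hw'] with τ hxτ hyτ hzτ hwτ
    exact ((hwτ.add ((hxτ.mul (hyτ.fun_pow 2)).div_const 3)).add ((hyτ.mul hzτ).div_const 2)).congr_deriv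
      (by ring)
  rw [hac.integral_eq_sub_of_ae_hasDerivAt hd, hx0, hz0, hw0]
  ring

end HorizontalCurve

theorem cartan_w_formula_general
    (u₁ u₂ x y z w : ℝ → ℝ)
    (hx : ∃ K, LipschitzWith K x) (hy : ∃ K, LipschitzWith K y)
    (hz : ∃ K, LipschitzWith K z) (hw : ∃ K, LipschitzWith K w)
    (hx0 : x 0 = 0) (hz0 : z 0 = 0) (hw0 : w 0 = 0)
    (hx' : ∀ᵐ t ∂(volume : Measure ℝ), HasDerivAt x (u₁ t) t)
    (hy' : ∀ᵐ t ∂(volume : Measure ℝ), HasDerivAt y (u₂ t) t)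
    (hz' : ∀ᵐ t ∂(volume : Measure ℝ),
      HasDerivAt z ((x t * u₂ t - y t * u₁ t) / 2) t)
    (hw' : ∀ᵐ t ∂(volume : Measure ℝ),
      HasDerivAt w (-(y t ^ 2 / 12) * u₁ t - (z t - x t * y t / 6) * u₂ t / 2) t) :
    ∀ t : ℝ, w t = -(x t * y t ^ 2) / 12
      - y t * (∫ τ in (0:ℝ)..t, x τ * u₂ τ) / 2
      + ∫ τ in (0:ℝ)..t, x τ * y τ * u₂ τ := by
  intro t
  obtain ⟨_, hx⟩ := hx
  obtain ⟨_, hy⟩ := hy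
  obtain ⟨_, hz⟩ := hz
  obtain ⟨_, hw⟩ := hw
  rw [integral_mul_u₂_eq_of_horizontal (hx.absolutelyContinuousOnInterval 0 t)
      (hy.absolutelyContinuousOnInterval 0 t) (hz.absolutelyContinuousOnInterval 0 t)
      hx0 hz0 hx' hy' hz',
    integral_mul_mul_u₂_eq_of_horizontal (hx.absolutelyContinuousOnInterval 0 t)
      (hy.absolutelyContinuousOnInterval 0 t) (hz.absolutelyContinuousOnInterval 0 t)
      (hw.absolutelyContinuousOnInterval 0 t) hx0 hz0 hw0 hx' hy' hz' hw']
  ring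

theorem cartan_w_formula
    (u₁ u₂ x y z w : ℝ → ℝ)
    (hu₁m : Measurable u₁) (hu₂m : Measurable u₂)
    (hu₁b : ∃ C, ∀ t, |u₁ t| ≤ C) (hu₂b : ∃ C, ∀ t, |u₂ t| ≤ C)
    (hx : ∃ K, LipschitzWith K x) (hy : ∃ K, LipschitzWith K y)
    (hz : ∃ K, LipschitzWith K z) (hw : ∃ K, LipschitzWith K w)
    (hx0 : x 0 = 0) (hy0 : y 0 = 0) (hz0 : z 0 = 0) (hw0 : w 0 = 0)
    (hx' : ∀ᵐ t ∂(volume : Measure ℝ), HasDerivAt x (u₁ t) t)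
    (hy' : ∀ᵐ t ∂(volume : Measure ℝ), HasDerivAt y (u₂ t) t)
    (hz' : ∀ᵐ t ∂(volume : Measure ℝ),
      HasDerivAt z ((x t * u₂ t - y t * u₁ t) / 2) t)
    (hw' : ∀ᵐ t ∂(volume : Measure ℝ),
      HasDerivAt w (-(y t ^ 2 / 12) * u₁ t - (z t - x t * y t / 6) * u₂ t / 2) t) :
    ∀ t : ℝ, w t = -(x t * y t ^ 2) / 12
      - y t * (∫ τ in (0:ℝ)..t, x τ * u₂ τ) / 2
      + ∫ τ in (0:ℝ)..t, x τ * y τ * u₂ τ :=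
  cartan_w_formula_general u₁ u₂ x y z w hx hy hz hw hx0 hz0 hw0 hx' hy' hz' hw'
end

section
/- Under the hypotheses of the full Hamiltonian system on the Cartan group (state equations x'=u₁, y'=u₂, z'=½(xu₂−yu₁), initial values 0, and adjoint equations ψ₁' = (1/12)ψ₄yu₁ − (½ψ₃ + (1/6)ψ₄x + (1/12)ψ₅y)u₂, ψ₂' = (½ψ₃ + (1/12)ψ₄x + (1/6)ψ₅y)u₁ − (1/12)ψ₅xu₂, ψ₃' = ½ψ₄u₁ + ½ψ₅u₂, ψ₄'=ψ₅'=0, with ψᵢ(0)=φᵢ), the solutions satisfy ψ₁(t) = φ₁ − ½φ₃y − (1/6)φ₅y² − (1/6)φ₄xy − ½φ₄z and ψ₂(t) = φ₂ + ½φ₃x + (1/6)φ₄x² + (1/6)φ₅xy − ½φ₅z for all t. -/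
/-!
Once `ψ₄` and `ψ₅` are known to be constant, the quantities `ψ₃ - (φ₄ x + φ₅ y) / 2`,
`ψ₁ + φ₃ y / 2 + φ₅ y² / 6 + φ₄ x y / 6 + φ₄ z / 2` and
`ψ₂ - φ₃ x / 2 - φ₄ x² / 6 - φ₅ x y / 6 + φ₅ z / 2` have derivative zero almost everywhere.
Lipschitz functions, and sums and products of them, are absolutely continuous on every compact
interval, and an absolutely continuous function whose derivative vanishes almost everywhere is
constant; so these first integrals keep their values at `t = 0`.
-/

open MeasureTheory Set

@[fun_prop]
def LocallyAbsolutelyContinuous (f : ℝ → ℝ) : Prop :=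
  ∀ a b, AbsolutelyContinuousOnInterval f a b

namespace LocallyAbsolutelyContinuous

variable {f g : ℝ → ℝ}

@[fun_prop]
theorem const (c : ℝ) : LocallyAbsolutelyContinuous fun _ => c := fun _ _ =>
  (LipschitzWith.const c).lipschitzOnWith.absolutelyContinuousOnInterval

@[fun_prop]
theorem add (hf : LocallyAbsolutelyContinuous f) (hg : LocallyAbsolutelyContinuous g) :
    LocallyAbsolutelyContinuous fun t => f t + g t := fun a b => (hf a b).fun_add (hg a b)

@[fun_prop]
theorem sub (hf : LocallyAbsolutelyContinuous f) (hg : LocallyAbsolutelyContinuous g) :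
    LocallyAbsolutelyContinuous fun t => f t - g t := fun a b => (hf a b).fun_sub (hg a b)

@[fun_prop]
theorem mul (hf : LocallyAbsolutelyContinuous f) (hg : LocallyAbsolutelyContinuous g) :
    LocallyAbsolutelyContinuous fun t => f t * g t := fun a b => (hf a b).fun_mul (hg a b)

@[fun_prop]
theorem div_const (hf : LocallyAbsolutelyContinuous f) (c : ℝ) :
    LocallyAbsolutelyContinuous fun t => f t / c := by
  simpa only [div_eq_mul_inv] using hf.mul (const c⁻¹)

@[fun_prop]
theorem pow (hf : LocallyAbsolutelyContinuous f) (n : ℕ) :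
    LocallyAbsolutelyContinuous fun t => f t ^ n := by
  induction n with
  | zero => simpa using const 1
  | succ n ih => simpa only [pow_succ] using ih.mul hf

theorem eq_of_ae_hasDerivAt_zero (hf : LocallyAbsolutelyContinuous f)
    (hf' : ∀ᵐ t, HasDerivAt f 0 t) (t : ℝ) : f t = f 0 := by
  obtain ⟨C, hC⟩ := (hf 0 t).const_of_ae_hasDerivAt_zero (hf'.mono fun _ h _ => h)
  rw [hC t right_mem_uIcc, hC 0 left_mem_uIcc]

end LocallyAbsolutelyContinuous

theorem LipschitzWith.locallyAbsolutelyContinuous {f : ℝ → ℝ} {K} (hf : LipschitzWith K f) :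
    LocallyAbsolutelyContinuous f := fun _ _ => hf.lipschitzOnWith.absolutelyContinuousOnInterval

section CartanCostate

variable {u₁ u₂ x y z : ℝ → ℝ} {φ₃ φ₄ φ₅ : ℝ}

theorem cartan_costate₃_eq {ψ₃ : ℝ → ℝ}
    (hx : LocallyAbsolutelyContinuous x) (hy : LocallyAbsolutelyContinuous y)
    (hψ₃ : LocallyAbsolutelyContinuous ψ₃) (hx0 : x 0 = 0) (hy0 : y 0 = 0)
    (hx' : ∀ᵐ t, HasDerivAt x (u₁ t) t) (hy' : ∀ᵐ t, HasDerivAt y (u₂ t) t)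
    (hψ₃' : ∀ᵐ t, HasDerivAt ψ₃ (φ₄ * u₁ t / 2 + φ₅ * u₂ t / 2) t) (t : ℝ) :
    ψ₃ t = ψ₃ 0 + φ₄ * x t / 2 + φ₅ * y t / 2 := by
  have hH' : ∀ᵐ s, HasDerivAt (fun s => ψ₃ s - φ₄ * x s / 2 - φ₅ * y s / 2) 0 s := by
    filter_upwards [hψ₃', hx', hy'] with s hψ₃s hxs hys
    refine ((hψ₃s.sub ((hxs.const_mul φ₄).div_const 2)).sub
      ((hys.const_mul φ₅).div_const 2)).congr_deriv ?_
    ring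
  have hH := LocallyAbsolutelyContinuous.eq_of_ae_hasDerivAt_zero (by fun_prop) hH' t
  simp only [hx0, hy0] at hH
  linear_combination hH

theorem cartan_costate₁_eq {ψ₁ ψ₃ : ℝ → ℝ}
    (hx : LocallyAbsolutelyContinuous x) (hy : LocallyAbsolutelyContinuous y)
    (hz : LocallyAbsolutelyContinuous z) (hψ₁ : LocallyAbsolutelyContinuous ψ₁)
    (hx0 : x 0 = 0) (hy0 : y 0 = 0) (hz0 : z 0 = 0)
    (hψ₃ : ∀ t, ψ₃ t = φ₃ + φ₄ * x t / 2 + φ₅ * y t / 2)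
    (hx' : ∀ᵐ t, HasDerivAt x (u₁ t) t) (hy' : ∀ᵐ t, HasDerivAt y (u₂ t) t)
    (hz' : ∀ᵐ t, HasDerivAt z ((x t * u₂ t - y t * u₁ t) / 2) t)
    (hψ₁' : ∀ᵐ t, HasDerivAt ψ₁ (φ₄ * y t * u₁ t / 12
        - (ψ₃ t / 2 + φ₄ * x t / 6 + φ₅ * y t / 12) * u₂ t) t) (t : ℝ) :
    ψ₁ t = ψ₁ 0 - φ₃ * y t / 2 - φ₅ * y t ^ 2 / 6 - φ₄ * x t * y t / 6 - φ₄ * z t / 2 := by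
  have hH' : ∀ᵐ s, HasDerivAt (fun s => ψ₁ s + φ₃ * y s / 2 + φ₅ * y s ^ 2 / 6
      + φ₄ * x s * y s / 6 + φ₄ * z s / 2) 0 s := by
    filter_upwards [hψ₁', hx', hy', hz'] with s hψ₁s hxs hys hzs
    refine (((hψ₁s.add ((hys.const_mul φ₃).div_const 2)).add
      (((hys.pow 2).const_mul φ₅).div_const 6)).add
      (((hxs.const_mul φ₄).mul hys).div_const 6)).add ((hzs.const_mul φ₄).div_const 2)
      |>.congr_deriv ?_
    rw [hψ₃]
    push_cast
    ring
  have hH := LocallyAbsolutelyContinuous.eq_of_ae_hasDerivAt_zero (by fun_prop) hH' t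
  simp only [hx0, hy0, hz0] at hH
  linear_combination hH

theorem cartan_costate₂_eq {ψ₂ ψ₃ : ℝ → ℝ}
    (hx : LocallyAbsolutelyContinuous x) (hy : LocallyAbsolutelyContinuous y)
    (hz : LocallyAbsolutelyContinuous z) (hψ₂ : LocallyAbsolutelyContinuous ψ₂)
    (hx0 : x 0 = 0) (hy0 : y 0 = 0) (hz0 : z 0 = 0)
    (hψ₃ : ∀ t, ψ₃ t = φ₃ + φ₄ * x t / 2 + φ₅ * y t / 2)
    (hx' : ∀ᵐ t, HasDerivAt x (u₁ t) t) (hy' : ∀ᵐ t, HasDerivAt y (u₂ t) t)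
    (hz' : ∀ᵐ t, HasDerivAt z ((x t * u₂ t - y t * u₁ t) / 2) t)
    (hψ₂' : ∀ᵐ t, HasDerivAt ψ₂ ((ψ₃ t / 2 + φ₄ * x t / 12 + φ₅ * y t / 6) * u₁ t
        - φ₅ * x t * u₂ t / 12) t) (t : ℝ) :
    ψ₂ t = ψ₂ 0 + φ₃ * x t / 2 + φ₄ * x t ^ 2 / 6 + φ₅ * x t * y t / 6 - φ₅ * z t / 2 := by
  have hH' : ∀ᵐ s, HasDerivAt (fun s => ψ₂ s - φ₃ * x s / 2 - φ₄ * x s ^ 2 / 6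
      - φ₅ * x s * y s / 6 + φ₅ * z s / 2) 0 s := by
    filter_upwards [hψ₂', hx', hy', hz'] with s hψ₂s hxs hys hzs
    refine (((hψ₂s.sub ((hxs.const_mul φ₃).div_const 2)).sub
      (((hxs.pow 2).const_mul φ₄).div_const 6)).sub
      (((hxs.const_mul φ₅).mul hys).div_const 6)).add ((hzs.const_mul φ₅).div_const 2)
      |>.congr_deriv ?_
    rw [hψ₃]
    push_cast
    ring
  have hH := LocallyAbsolutelyContinuous.eq_of_ae_hasDerivAt_zero (by fun_prop) hH' t
  simp only [hx0, hy0, hz0] at hH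
  linear_combination hH

end CartanCostate

theorem cartan_adjoint_12_general
    (u₁ u₂ x y z ψ₁ ψ₂ ψ₃ ψ₄ ψ₅ : ℝ → ℝ) (φ₁ φ₂ φ₃ φ₄ φ₅ : ℝ)
    (hx : ∃ K, LipschitzWith K x) (hy : ∃ K, LipschitzWith K y)
    (hz : ∃ K, LipschitzWith K z)
    (hψ₁ : ∃ K, LipschitzWith K ψ₁) (hψ₂ : ∃ K, LipschitzWith K ψ₂)
    (hψ₃ : ∃ K, LipschitzWith K ψ₃) (hψ₄ : ∃ K, LipschitzWith K ψ₄)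
    (hψ₅ : ∃ K, LipschitzWith K ψ₅)
    (hx0 : x 0 = 0) (hy0 : y 0 = 0) (hz0 : z 0 = 0)
    (hψ10 : ψ₁ 0 = φ₁) (hψ20 : ψ₂ 0 = φ₂) (hψ30 : ψ₃ 0 = φ₃)
    (hψ40 : ψ₄ 0 = φ₄) (hψ50 : ψ₅ 0 = φ₅)
    (hx' : ∀ᵐ t ∂(volume : Measure ℝ), HasDerivAt x (u₁ t) t)
    (hy' : ∀ᵐ t ∂(volume : Measure ℝ), HasDerivAt y (u₂ t) t)
    (hz' : ∀ᵐ t ∂(volume : Measure ℝ),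
      HasDerivAt z ((x t * u₂ t - y t * u₁ t) / 2) t)
    (hψ₁' : ∀ᵐ t ∂(volume : Measure ℝ),
      HasDerivAt ψ₁ (ψ₄ t * y t * u₁ t / 12
        - (ψ₃ t / 2 + ψ₄ t * x t / 6 + ψ₅ t * y t / 12) * u₂ t) t)
    (hψ₂' : ∀ᵐ t ∂(volume : Measure ℝ),
      HasDerivAt ψ₂ ((ψ₃ t / 2 + ψ₄ t * x t / 12 + ψ₅ t * y t / 6) * u₁ t
        - ψ₅ t * x t * u₂ t / 12) t)
    (hψ₃' : ∀ᵐ t ∂(volume : Measure ℝ),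
      HasDerivAt ψ₃ (ψ₄ t * u₁ t / 2 + ψ₅ t * u₂ t / 2) t)
    (hψ₄' : ∀ᵐ t ∂(volume : Measure ℝ), HasDerivAt ψ₄ 0 t)
    (hψ₅' : ∀ᵐ t ∂(volume : Measure ℝ), HasDerivAt ψ₅ 0 t) :
    (∀ t : ℝ, ψ₁ t = φ₁ - φ₃ * y t / 2 - φ₅ * y t ^ 2 / 6 - φ₄ * x t * y t / 6
        - φ₄ * z t / 2) ∧
    (∀ t : ℝ, ψ₂ t = φ₂ + φ₃ * x t / 2 + φ₄ * x t ^ 2 / 6 + φ₅ * x t * y t / 6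
        - φ₅ * z t / 2) := by
  replace hx := hx.elim fun _ h => h.locallyAbsolutelyContinuous
  replace hy := hy.elim fun _ h => h.locallyAbsolutelyContinuous
  replace hz := hz.elim fun _ h => h.locallyAbsolutelyContinuous
  replace hψ₁ := hψ₁.elim fun _ h => h.locallyAbsolutelyContinuous
  replace hψ₂ := hψ₂.elim fun _ h => h.locallyAbsolutelyContinuous
  replace hψ₃ := hψ₃.elim fun _ h => h.locallyAbsolutelyContinuous
  replace hψ₄ := hψ₄.elim fun _ h => h.locallyAbsolutelyContinuous
  replace hψ₅ := hψ₅.elim fun _ h => h.locallyAbsolutelyContinuous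
  have h₄ (t : ℝ) : ψ₄ t = φ₄ := hψ40 ▸ hψ₄.eq_of_ae_hasDerivAt_zero hψ₄' t
  have h₅ (t : ℝ) : ψ₅ t = φ₅ := hψ50 ▸ hψ₅.eq_of_ae_hasDerivAt_zero hψ₅' t
  simp only [h₄, h₅] at hψ₁' hψ₂' hψ₃'
  have h₃ (t : ℝ) : ψ₃ t = φ₃ + φ₄ * x t / 2 + φ₅ * y t / 2 :=
    hψ30 ▸ cartan_costate₃_eq hx hy hψ₃ hx0 hy0 hx' hy' hψ₃' t
  exact ⟨fun t => hψ10 ▸ cartan_costate₁_eq hx hy hz hψ₁ hx0 hy0 hz0 h₃ hx' hy' hz' hψ₁' t,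
    fun t => hψ20 ▸ cartan_costate₂_eq hx hy hz hψ₂ hx0 hy0 hz0 h₃ hx' hy' hz' hψ₂' t⟩

theorem cartan_adjoint_12
    (u₁ u₂ x y z ψ₁ ψ₂ ψ₃ ψ₄ ψ₅ : ℝ → ℝ) (φ₁ φ₂ φ₃ φ₄ φ₅ : ℝ)
    (hu₁m : Measurable u₁) (hu₂m : Measurable u₂)
    (hu₁b : ∃ C, ∀ t, |u₁ t| ≤ C) (hu₂b : ∃ C, ∀ t, |u₂ t| ≤ C)
    (hx : ∃ K, LipschitzWith K x) (hy : ∃ K, LipschitzWith K y)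
    (hz : ∃ K, LipschitzWith K z)
    (hψ₁ : ∃ K, LipschitzWith K ψ₁) (hψ₂ : ∃ K, LipschitzWith K ψ₂)
    (hψ₃ : ∃ K, LipschitzWith K ψ₃) (hψ₄ : ∃ K, LipschitzWith K ψ₄)
    (hψ₅ : ∃ K, LipschitzWith K ψ₅)
    (hx0 : x 0 = 0) (hy0 : y 0 = 0) (hz0 : z 0 = 0)
    (hψ10 : ψ₁ 0 = φ₁) (hψ20 : ψ₂ 0 = φ₂) (hψ30 : ψ₃ 0 = φ₃)
    (hψ40 : ψ₄ 0 = φ₄) (hψ50 : ψ₅ 0 = φ₅)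
    (hx' : ∀ᵐ t ∂(volume : Measure ℝ), HasDerivAt x (u₁ t) t)
    (hy' : ∀ᵐ t ∂(volume : Measure ℝ), HasDerivAt y (u₂ t) t)
    (hz' : ∀ᵐ t ∂(volume : Measure ℝ),
      HasDerivAt z ((x t * u₂ t - y t * u₁ t) / 2) t)
    (hψ₁' : ∀ᵐ t ∂(volume : Measure ℝ),
      HasDerivAt ψ₁ (ψ₄ t * y t * u₁ t / 12
        - (ψ₃ t / 2 + ψ₄ t * x t / 6 + ψ₅ t * y t / 12) * u₂ t) t)
    (hψ₂' : ∀ᵐ t ∂(volume : Measure ℝ),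
      HasDerivAt ψ₂ ((ψ₃ t / 2 + ψ₄ t * x t / 12 + ψ₅ t * y t / 6) * u₁ t
        - ψ₅ t * x t * u₂ t / 12) t)
    (hψ₃' : ∀ᵐ t ∂(volume : Measure ℝ),
      HasDerivAt ψ₃ (ψ₄ t * u₁ t / 2 + ψ₅ t * u₂ t / 2) t)
    (hψ₄' : ∀ᵐ t ∂(volume : Measure ℝ), HasDerivAt ψ₄ 0 t)
    (hψ₅' : ∀ᵐ t ∂(volume : Measure ℝ), HasDerivAt ψ₅ 0 t) :
    (∀ t : ℝ, ψ₁ t = φ₁ - φ₃ * y t / 2 - φ₅ * y t ^ 2 / 6 - φ₄ * x t * y t / 6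
        - φ₄ * z t / 2) ∧
    (∀ t : ℝ, ψ₂ t = φ₂ + φ₃ * x t / 2 + φ₄ * x t ^ 2 / 6 + φ₅ * x t * y t / 6
        - φ₅ * z t / 2) :=
  cartan_adjoint_12_general u₁ u₂ x y z ψ₁ ψ₂ ψ₃ ψ₄ ψ₅ φ₁ φ₂ φ₃ φ₄ φ₅ hx hy hz hψ₁ hψ₂ hψ₃ hψ₄ hψ₅
    hx0 hy0 hz0 hψ10 hψ20 hψ30 hψ40 hψ50 hx' hy' hz' hψ₁' hψ₂' hψ₃' hψ₄' hψ₅'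
end

section
/- Along a normal extremal trajectory of the Cartan group starting at the identity (so x(0)=…=w(0)=0) with h₁u₁ + h₂u₂ ≡ 1 a.e., one has for all t: φ₁x(t) + φ₂y(t) + 2φ₃z(t) + 3φ₄v(t) + 3φ₅w(t) + (φ₄/2)x(t)z(t) + (φ₅/2)y(t)z(t) = t. -/
/-!
The left-hand side, `cartanTimeFunction` evaluated along the trajectory, is built from the
coordinates with the dilation weights `1, 1, 2, 3, 3` of the Cartan group; differentiating it along
any horizontal curve yields exactly `h₁ u₁ + h₂ u₂`, which is `1` almost everywhere. Being a
polynomial in Lipschitz functions it is absolutely continuous, so an a.e. derivative `1` and the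
value `0` at the identity force it to equal `t`.
-/

open MeasureTheory Set

theorem AbsolutelyContinuousOnInterval.sub_eq_of_ae_hasDerivAt {f : ℝ → ℝ} {a b c : ℝ}
    (hf : AbsolutelyContinuousOnInterval f a b) (hf' : ∀ᵐ t, HasDerivAt f c t) :
    f b - f a = c * (b - a) := by
  have hg : AbsolutelyContinuousOnInterval (fun t => f t - c * t) a b :=
    hf.fun_sub (LipschitzWith.id.lipschitzOnWith.absolutelyContinuousOnInterval.const_mul c)
  have hg' : ∀ᵐ t, t ∈ uIcc a b → HasDerivAt (fun t => f t - c * t) 0 t := by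
    filter_upwards [hf'] with t ht _
    simpa using ht.fun_sub ((hasDerivAt_id' t).const_mul c)
  obtain ⟨C, hC⟩ := hg.const_of_ae_hasDerivAt_zero hg'
  have hb := hC b right_mem_uIcc
  have ha := hC a left_mem_uIcc
  linarith

section Cartan

variable (φ₁ φ₂ φ₃ φ₄ φ₅ : ℝ)

noncomputable def cartanTimeFunction (x y z v w : ℝ) : ℝ :=
  φ₁ * x + φ₂ * y + 2 * φ₃ * z + 3 * φ₄ * v + 3 * φ₅ * w + φ₄ / 2 * (x * z) + φ₅ / 2 * (y * z)

variable {φ₁ φ₂ φ₃ φ₄ φ₅}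

theorem hasDerivAt_cartanTimeFunction {x y z v w : ℝ → ℝ} {t u₁ u₂ : ℝ}
    (hx : HasDerivAt x u₁ t) (hy : HasDerivAt y u₂ t)
    (hz : HasDerivAt z ((x t * u₂ - y t * u₁) / 2) t)
    (hv : HasDerivAt v (-(z t + x t * y t / 6) * u₁ / 2 + x t ^ 2 / 12 * u₂) t)
    (hw : HasDerivAt w (-(y t ^ 2 / 12) * u₁ - (z t - x t * y t / 6) * u₂ / 2) t) :
    HasDerivAt (fun s => cartanTimeFunction φ₁ φ₂ φ₃ φ₄ φ₅ (x s) (y s) (z s) (v s) (w s))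
      ((φ₁ - (φ₃ + φ₄ * x t / 2 + φ₅ * y t / 2) * y t - φ₄ * z t) * u₁
        + (φ₂ + (φ₃ + φ₄ * x t / 2 + φ₅ * y t / 2) * x t - φ₅ * z t) * u₂) t := by
  refine (((((((hx.const_mul φ₁).add (hy.const_mul φ₂)).add (hz.const_mul (2 * φ₃))).add
    (hv.const_mul (3 * φ₄))).add (hw.const_mul (3 * φ₅))).add
    ((hx.mul hz).const_mul (φ₄ / 2))).add ((hy.mul hz).const_mul (φ₅ / 2))).congr_deriv ?_
  ring

theorem absolutelyContinuousOnInterval_cartanTimeFunction {x y z v w : ℝ → ℝ}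
    {Kx Ky Kz Kv Kw : NNReal} (hx : LipschitzWith Kx x) (hy : LipschitzWith Ky y)
    (hz : LipschitzWith Kz z) (hv : LipschitzWith Kv v) (hw : LipschitzWith Kw w) (a b : ℝ) :
    AbsolutelyContinuousOnInterval
      (fun s => cartanTimeFunction φ₁ φ₂ φ₃ φ₄ φ₅ (x s) (y s) (z s) (v s) (w s)) a b := by
  have hx := hx.lipschitzOnWith.absolutelyContinuousOnInterval (a := a) (b := b)
  have hy := hy.lipschitzOnWith.absolutelyContinuousOnInterval (a := a) (b := b)
  have hz := hz.lipschitzOnWith.absolutelyContinuousOnInterval (a := a) (b := b)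
  have hv := hv.lipschitzOnWith.absolutelyContinuousOnInterval (a := a) (b := b)
  have hw := hw.lipschitzOnWith.absolutelyContinuousOnInterval (a := a) (b := b)
  exact (((((((hx.const_mul φ₁).fun_add (hy.const_mul φ₂)).fun_add
    (hz.const_mul (2 * φ₃))).fun_add (hv.const_mul (3 * φ₄))).fun_add
    (hw.const_mul (3 * φ₅))).fun_add ((hx.fun_mul hz).const_mul (φ₄ / 2))).fun_add
    ((hy.fun_mul hz).const_mul (φ₅ / 2)))

end Cartan

theorem cartan_normal_time_identity_general
    (u₁ u₂ x y z v w : ℝ → ℝ) (φ₁ φ₂ φ₃ φ₄ φ₅ : ℝ)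
    (hx : ∃ K, LipschitzWith K x) (hy : ∃ K, LipschitzWith K y)
    (hz : ∃ K, LipschitzWith K z) (hv : ∃ K, LipschitzWith K v)
    (hw : ∃ K, LipschitzWith K w)
    (hx0 : x 0 = 0) (hy0 : y 0 = 0) (hz0 : z 0 = 0) (hv0 : v 0 = 0) (hw0 : w 0 = 0)
    (hx' : ∀ᵐ t ∂(volume : Measure ℝ), HasDerivAt x (u₁ t) t)
    (hy' : ∀ᵐ t ∂(volume : Measure ℝ), HasDerivAt y (u₂ t) t)
    (hz' : ∀ᵐ t ∂(volume : Measure ℝ),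
      HasDerivAt z ((x t * u₂ t - y t * u₁ t) / 2) t)
    (hv' : ∀ᵐ t ∂(volume : Measure ℝ),
      HasDerivAt v (-(z t + x t * y t / 6) * u₁ t / 2 + x t ^ 2 / 12 * u₂ t) t)
    (hw' : ∀ᵐ t ∂(volume : Measure ℝ),
      HasDerivAt w (-(y t ^ 2 / 12) * u₁ t - (z t - x t * y t / 6) * u₂ t / 2) t)
    (h₁ h₂ : ℝ → ℝ)
    (hh₁ : ∀ t, h₁ t = φ₁ - (φ₃ + φ₄ * x t / 2 + φ₅ * y t / 2) * y t - φ₄ * z t)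
    (hh₂ : ∀ t, h₂ t = φ₂ + (φ₃ + φ₄ * x t / 2 + φ₅ * y t / 2) * x t - φ₅ * z t)
    (hM : ∀ᵐ t ∂(volume : Measure ℝ), h₁ t * u₁ t + h₂ t * u₂ t = 1) :
    ∀ t : ℝ, φ₁ * x t + φ₂ * y t + 2 * φ₃ * z t + 3 * φ₄ * v t + 3 * φ₅ * w t
      + φ₄ / 2 * (x t * z t) + φ₅ / 2 * (y t * z t) = t := by
  intro t
  obtain ⟨_, hx⟩ := hx
  obtain ⟨_, hy⟩ := hy
  obtain ⟨_, hz⟩ := hz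
  obtain ⟨_, hv⟩ := hv
  obtain ⟨_, hw⟩ := hw
  have hderiv : ∀ᵐ s, HasDerivAt
      (fun s => cartanTimeFunction φ₁ φ₂ φ₃ φ₄ φ₅ (x s) (y s) (z s) (v s) (w s)) 1 s := by
    filter_upwards [hx', hy', hz', hv', hw', hM] with s hxs hys hzs hvs hws hMs
    rw [hh₁, hh₂] at hMs
    exact hMs ▸ hasDerivAt_cartanTimeFunction hxs hys hzs hvs hws
  have hincr := (absolutelyContinuousOnInterval_cartanTimeFunction hx hy hz hv hw 0 t
    ).sub_eq_of_ae_hasDerivAt hderiv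
  simpa [cartanTimeFunction, hx0, hy0, hz0, hv0, hw0] using hincr

theorem cartan_normal_time_identity
    (u₁ u₂ x y z v w : ℝ → ℝ) (φ₁ φ₂ φ₃ φ₄ φ₅ : ℝ)
    (hu₁m : Measurable u₁) (hu₂m : Measurable u₂)
    (hu₁b : ∃ C, ∀ t, |u₁ t| ≤ C) (hu₂b : ∃ C, ∀ t, |u₂ t| ≤ C)
    (hx : ∃ K, LipschitzWith K x) (hy : ∃ K, LipschitzWith K y)
    (hz : ∃ K, LipschitzWith K z) (hv : ∃ K, LipschitzWith K v)
    (hw : ∃ K, LipschitzWith K w)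
    (hx0 : x 0 = 0) (hy0 : y 0 = 0) (hz0 : z 0 = 0) (hv0 : v 0 = 0) (hw0 : w 0 = 0)
    (hx' : ∀ᵐ t ∂(volume : Measure ℝ), HasDerivAt x (u₁ t) t)
    (hy' : ∀ᵐ t ∂(volume : Measure ℝ), HasDerivAt y (u₂ t) t)
    (hz' : ∀ᵐ t ∂(volume : Measure ℝ),
      HasDerivAt z ((x t * u₂ t - y t * u₁ t) / 2) t)
    (hv' : ∀ᵐ t ∂(volume : Measure ℝ),
      HasDerivAt v (-(z t + x t * y t / 6) * u₁ t / 2 + x t ^ 2 / 12 * u₂ t) t)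
    (hw' : ∀ᵐ t ∂(volume : Measure ℝ),
      HasDerivAt w (-(y t ^ 2 / 12) * u₁ t - (z t - x t * y t / 6) * u₂ t / 2) t)
    (h₁ h₂ : ℝ → ℝ)
    (hh₁ : ∀ t, h₁ t = φ₁ - (φ₃ + φ₄ * x t / 2 + φ₅ * y t / 2) * y t - φ₄ * z t)
    (hh₂ : ∀ t, h₂ t = φ₂ + (φ₃ + φ₄ * x t / 2 + φ₅ * y t / 2) * x t - φ₅ * z t)
    (hM : ∀ᵐ t ∂(volume : Measure ℝ), h₁ t * u₁ t + h₂ t * u₂ t = 1) :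
    ∀ t : ℝ, φ₁ * x t + φ₂ * y t + 2 * φ₃ * z t + 3 * φ₄ * v t + 3 * φ₅ * w t
      + φ₄ / 2 * (x t * z t) + φ₅ / 2 * (y t * z t) = t :=
  cartan_normal_time_identity_general u₁ u₂ x y z v w φ₁ φ₂ φ₃ φ₄ φ₅ hx hy hz hv hw hx0 hy0 hz0 hv0
    hw0 hx' hy' hz' hv' hw' h₁ h₂ hh₁ hh₂ hM
end
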